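/- The commutator of the cup-one product on mod-2 simplicial cochains satisfies the Jacobi identity exactly at the cochain level: for every simplicial set X, defining [a,b] = a⌣₁b + b⌣₁a, one has [[a,b],c] + [[b,c],a] + [[c,a],b] = 0 for all homogeneous cochains a, b, c of X with ℤ/2 coefficients. -/

import Mathlib

/-!
Mod-2 (non-normalized) simplicial cochains of a simplicial set, with the cup
product, Steenrod's cup-one product and related operations.

For a simplicial set `X`, a weakly increasing vertex map `f : [k] → [n]` and
`σ ∈ X_n`, the face `σ(f 0, …, f k) ∈ X_k` is obtained by applying `X` to the
corresponding monotone map.  `Ch X p = X_p → ℤ/2` is the group of mod-2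
cochains of degree `p`; `ι` includes it into the total cochain group `TCh X`
(so that cochains whose degrees are given by different, but equal, numerical
expressions can be compared).
-/

open CategoryTheory Simplicial

/-- Mod-2 (non-normalized) simplicial cochains of degree `p`. -/
abbrev Ch (X : SSet) (p : ℕ) : Type _ := X _⦋p⦌ → ZMod 2

/-- The total cochain group (all degrees at once). -/
abbrev TCh (X : SSet) : Type _ := ∀ n : ℕ, X _⦋n⦌ → ZMod 2

/-- The face `σ(f 0, …, f k)` of a simplex `σ ∈ X_n` along a monotone vertex
map `f : [k] → [n]`. -/
def face (X : SSet) {k n : ℕ} (f : Fin (k + 1) →o Fin (n + 1)) (σ : X _⦋n⦌) : X _⦋k⦌ :=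
  X.map (SimplexCategory.mkHom f).op σ

/-- Helper building a monotone vertex map from a function on `ℕ`. -/
def mkVert {m n : ℕ} (f : ℕ → ℕ) (hb : ∀ l, l < m + 1 → f l < n + 1)
    (hm : ∀ k l, k ≤ l → l < m + 1 → f k ≤ f l) : Fin (m + 1) →o Fin (n + 1) where
  toFun l := ⟨f l.1, hb l.1 l.isLt⟩
  monotone' k l h := by
    simpa [Fin.mk_le_mk] using hm k.1 l.1 (Fin.le_def.mp h) l.isLt

/-- Inclusion of degree-`p` cochains into the total cochain group. -/
def ι (X : SSet) (p : ℕ) (a : Ch X p) : TCh X := fun n =>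
  if h : n = p then fun σ => a (cast (by rw [h]) σ) else 0

/-- Steenrod's cup-one product
`(a ⌣₁ b)(σ) = Σ_{i=0}^{p−1} a(σ(0,…,i,i+q,…,n)) · b(σ(i,…,i+q))`,
for `σ ∈ X_n`, `n = p + q − 1` (so `a ⌣₁ b = 0` when `p = 0`). -/
def cup1 (X : SSet) (p q : ℕ) (a : Ch X p) (b : Ch X q) : Ch X (p + q - 1) :=
  fun σ => ∑ i : Fin p,
    a (face X (mkVert (m := p) (n := p + q - 1)
        (fun l => if l ≤ i.1 then l else l + q - 1)
        (fun l hl => by have := i.isLt; beta_reduce; split <;> omega)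
        (fun k l h hl => by have := i.isLt; beta_reduce; split_ifs <;> omega)) σ) *
    b (face X (mkVert (m := q) (n := p + q - 1)
        (fun l => i.1 + l)
        (fun l hl => by have := i.isLt; beta_reduce; omega)
        (fun k l h _ => by beta_reduce; omega)) σ)

/-- Transport of cochains along an equality of degrees. -/
def chCast (X : SSet) {m n : ℕ} (h : m = n) (a : Ch X m) : Ch X n := h ▸ a

/-- The commutator bracket `[a,b] = a ⌣₁ b + b ⌣₁ a`. -/
def brk (X : SSet) (p q : ℕ) (a : Ch X p) (b : Ch X q) : Ch X (p + q - 1) :=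
  cup1 X p q a b + chCast X (by omega : q + p - 1 = p + q - 1) (cup1 X q p b a)

lemma tch_add_self (X : SSet) (x : TCh X) : x + x = 0 := by
  funext n σ; exact CharTwo.add_self_eq_zero (x n σ)

lemma ι_add (X : SSet) (p : ℕ) (a b : Ch X p) : ι X p (a + b) = ι X p a + ι X p b := by
  funext n; by_cases h : n = p <;> simp [ι, h] <;> rfl

lemma ι_zero (X : SSet) (p : ℕ) : ι X p (0 : Ch X p) = 0 := by
  funext n; by_cases h : n = p <;> simp [ι, h] <;> rfl

lemma ι_chCast (X : SSet) {m n : ℕ} (h : m = n) (a : Ch X m) :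
    ι X n (chCast X h a) = ι X m a := by subst h; rfl

lemma chCast_add (X : SSet) {m n : ℕ} (h : m = n) (a b : Ch X m) :
    chCast X h (a + b) = chCast X h a + chCast X h b := by subst h; rfl

lemma face_face (X : SSet) {k m n : ℕ} (f : Fin (m + 1) →o Fin (n + 1))
    (g : Fin (k + 1) →o Fin (m + 1)) (σ : X _⦋n⦌) :
    face X g (face X f σ) = face X (f.comp g) σ := by
  unfold face
  rw [← FunctorToTypes.map_comp_apply]
  rfl

lemma face_congr (X : SSet) {k n : ℕ} {f g : Fin (k + 1) →o Fin (n + 1)}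
    (h : ∀ l : Fin (k + 1), (f l : ℕ) = (g l : ℕ)) (σ : X _⦋n⦌) :
    face X f σ = face X g σ := by
  have : f = g := by ext l; exact h l
  rw [this]

lemma mul3_congr {x x' y y' z z' : ZMod 2} (hx : x = x') (hy : y = y') (hz : z = z') :
    x * (y * z) = x' * y' * z' := by rw [hx, hy, hz, mul_assoc]

lemma cup1_add_left (X : SSet) (p q : ℕ) (a a' : Ch X p) (b : Ch X q) :
    cup1 X p q (a + a') b = cup1 X p q a b + cup1 X p q a' b := by
  funext σ; simp [cup1, add_mul, Finset.sum_add_distrib]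

lemma cup1_add_right (X : SSet) (p q : ℕ) (a : Ch X p) (b b' : Ch X q) :
    cup1 X p q a (b + b') = cup1 X p q a b + cup1 X p q a b' := by
  funext σ; simp [cup1, mul_add, Finset.sum_add_distrib]

lemma cup1_chCast_left (X : SSet) {p p' q : ℕ} (h : p' = p) (a : Ch X p') (b : Ch X q) :
    cup1 X p q (chCast X h a) b
      = chCast X (show p' + q - 1 = p + q - 1 by rw [h]) (cup1 X p' q a b) := by
  subst h; rfl

lemma cup1_chCast_right (X : SSet) {p q q' : ℕ} (h : q' = q) (a : Ch X p) (b : Ch X q') :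
    cup1 X p q a (chCast X h b)
      = chCast X (show p + q' - 1 = p + q - 1 by rw [h]) (cup1 X p q' a b) := by
  subst h; rfl

lemma cup1_deg_zero (X : SSet) (q : ℕ) (a : Ch X 0) (b : Ch X q) :
    cup1 X 0 q a b = 0 := by
  funext σ; simp [cup1]

lemma cup1_zero_left (X : SSet) (p q : ℕ) (b : Ch X q) :
    cup1 X p q (0 : Ch X p) b = 0 := by
  funext σ; simp [cup1]

lemma cup1_zero_right (X : SSet) (p q : ℕ) (a : Ch X p) :
    cup1 X p q a (0 : Ch X q) = 0 := by
  funext σ; simp [cup1]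

/-- vertex map with clamping, so it is defined at any target degree -/
def nMap (k n : ℕ) (f : ℕ → ℕ) (hf : ∀ i j, i ≤ j → f i ≤ f j) :
    Fin (k + 1) →o Fin (n + 1) :=
  mkVert (fun l => min (f l) n) (fun l _ => by beta_reduce; omega)
    (fun i j hij _ => by have := hf i j hij; beta_reduce; omega)

lemma nMap_val (k n : ℕ) (f : ℕ → ℕ) (hf) (l : Fin (k + 1)) :
    (nMap k n f hf l : ℕ) = min (f l.1) n := rfl

lemma mkVert_val {m n : ℕ} (f : ℕ → ℕ) (hb hm) (l : Fin (m + 1)) :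
    (mkVert (m := m) (n := n) f hb hm l : ℕ) = f l.1 := rfl

/-- double-insertion sum: `b` inserted at position `s`, `c` at position `t`, `s < t`. -/
def dd (X : SSet) (p q r N : ℕ) (a : Ch X p) (b : Ch X q) (c : Ch X r) : Ch X N :=
  fun σ => ∑ s : Fin p, ∑ t : Fin p,
    if s.1 < t.1 then
      a (face X (nMap p N (fun l => if l ≤ s.1 then l else if l ≤ max t.1 (s.1 + 1) then l + q - 1
            else l + q + r - 2)
          (fun i j hij => by beta_reduce; split_ifs <;> omega)) σ)
      * b (face X (nMap q N (fun m => s.1 + m) (fun i j hij => by beta_reduce; omega)) σ)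
      * c (face X (nMap r N (fun m => t.1 + q - 1 + m) (fun i j hij => by beta_reduce; omega)) σ)
    else 0

/-- nested-insertion sum: `c` inserted into `b` at `l`, the result into `a` at `i`. -/
def nn (X : SSet) (p q r N : ℕ) (a : Ch X p) (b : Ch X q) (c : Ch X r) : Ch X N :=
  fun σ => ∑ i : Fin p, ∑ l : Fin q,
    a (face X (nMap p N (fun l' => if l' ≤ i.1 then l' else l' + q + r - 2)
        (fun i' j' hij => by have := l.isLt; beta_reduce; split_ifs <;> omega)) σ)
    * b (face X (nMap q N (fun m => i.1 + (if m ≤ l.1 then m else m + r - 1))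
        (fun i' j' hij => by beta_reduce; split_ifs <;> omega)) σ)
    * c (face X (nMap r N (fun m => i.1 + l.1 + m) (fun i' j' hij => by beta_reduce; omega)) σ)

lemma ι_dd (X : SSet) (p q r : ℕ) {M N : ℕ} (h : M = N) (a : Ch X p) (b : Ch X q) (c : Ch X r) :
    ι X M (dd X p q r M a b c) = ι X N (dd X p q r N a b c) := by subst h; rfl

lemma ι_nn (X : SSet) (p q r : ℕ) {M N : ℕ} (h : M = N) (a : Ch X p) (b : Ch X q) (c : Ch X r) :
    ι X M (nn X p q r M a b c) = ι X N (nn X p q r N a b c) := by subst h; rfl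

lemma nn_q_zero (X : SSet) (p r N : ℕ) (a : Ch X p) (b : Ch X 0) (c : Ch X r) :
    nn X p 0 r N a b c = 0 := by
  funext σ; simp [nn]

lemma L2 (X : SSet) (p q r : ℕ) (hp : 1 ≤ p) (a : Ch X p) (b : Ch X q) (c : Ch X r) :
    ι X (p + (q + r - 1) - 1) (cup1 X p (q + r - 1) a (cup1 X q r b c))
      = ι X ((p + q - 1) + r - 1) (nn X p q r ((p + q - 1) + r - 1) a b c) := by
  by_cases hq : q = 0
  · subst hq
    rw [cup1_deg_zero, cup1_zero_right, ι_zero, nn_q_zero, ι_zero]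
  · have hq1 : 1 ≤ q := Nat.one_le_iff_ne_zero.mpr hq
    rw [ι_nn X p q r (show ((p + q - 1) + r - 1 : ℕ) = p + (q + r - 1) - 1 by omega)]
    refine congrArg (ι X (p + (q + r - 1) - 1)) (funext fun σ => ?_)
    simp only [cup1, nn, face_face, Finset.mul_sum]
    refine Finset.sum_congr rfl fun i _ => Finset.sum_congr rfl fun l _ => ?_
    have hi := i.isLt; have hl := l.isLt
    refine mul3_congr (congrArg a (face_congr X (fun v => ?_) σ))
      (congrArg b (face_congr X (fun v => ?_) σ))
      (congrArg c (face_congr X (fun v => ?_) σ)) <;>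
    · have hv := v.isLt
      simp only [mkVert_val, nMap_val, OrderHom.comp_coe, Function.comp_apply]
      first | (split_ifs <;> omega) | omega

lemma ite_tri (x : ZMod 2) (J I qq : ℕ) :
    x = (if J < I then x else 0) + (if I + qq ≤ J then x else 0)
      + (if I ≤ J ∧ J < I + qq then x else 0) := by
  split_ifs <;> first | omega | simp

lemma mul3_swap {x x' y y' z z' : ZMod 2} (hx : x = x') (hy : y = y') (hz : z = z') :
    x * y * z = x' * z' * y' := by rw [hx, hy, hz]; ring

lemma mul3_congr' {x x' y y' z z' : ZMod 2} (hx : x = x') (hy : y = y') (hz : z = z') :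
    x * y * z = x' * y' * z' := by rw [hx, hy, hz]

lemma L1 (X : SSet) (p q r : ℕ) (hp : 1 ≤ p) (a : Ch X p) (b : Ch X q) (c : Ch X r) :
    ι X ((p + q - 1) + r - 1) (cup1 X (p + q - 1) r (cup1 X p q a b) c)
    = ι X ((p + q - 1) + r - 1) (dd X p r q ((p + q - 1) + r - 1) a c b)
    + ι X ((p + q - 1) + r - 1) (dd X p q r ((p + q - 1) + r - 1) a b c)
    + ι X ((p + q - 1) + r - 1) (nn X p q r ((p + q - 1) + r - 1) a b c) := by
  rw [← ι_add, ← ι_add]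
  refine congrArg _ (funext fun σ => ?_)
  simp only [cup1, dd, nn, face_face, Finset.sum_mul, Pi.add_apply]
  refine Eq.trans (Finset.sum_congr rfl fun J _ => Finset.sum_congr rfl fun I _ =>
    ite_tri _ J.1 I.1 q) ?_
  simp only [Finset.sum_add_distrib]
  refine congrArg₂ (· + ·) (congrArg₂ (· + ·) ?_ ?_) ?_
  · -- region J < I  :  c inserted left of b
    rw [← Finset.sum_product', ← Finset.sum_product', ← Finset.sum_filter,
      ← Finset.sum_filter]
    refine Finset.sum_bij'
      (i := fun x hx => ((⟨x.1.1, by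
          have h1 := (Finset.mem_filter.mp hx).2; have := x.2.isLt; omega⟩ : Fin p), x.2))
      (j := fun y hy => ((⟨y.1.1, by
          have h1 := (Finset.mem_filter.mp hy).2; have := y.2.isLt; omega⟩ : Fin (p + q - 1)),
          y.2))
      ?_ ?_ ?_ ?_ ?_
    · intro x hx
      have h1 := (Finset.mem_filter.mp hx).2
      simp only [Finset.mem_filter, Finset.mem_product, Finset.mem_univ, true_and,
        and_true, Fin.val_mk]
      omega
    · intro y hy
      have h1 := (Finset.mem_filter.mp hy).2
      simp only [Finset.mem_filter, Finset.mem_product, Finset.mem_univ, true_and,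
        and_true, Fin.val_mk]
      omega
    · intro x hx; rfl
    · intro y hy; rfl
    · intro x hx
      have h1 := (Finset.mem_filter.mp hx).2
      have hJ := x.1.isLt; have hI := x.2.isLt
      refine mul3_swap (congrArg a (face_congr X (fun v => ?_) σ))
        (congrArg b (face_congr X (fun v => ?_) σ))
        (congrArg c (face_congr X (fun v => ?_) σ)) <;>
      · have hv := v.isLt
        simp only [mkVert_val, nMap_val, OrderHom.comp_coe, Function.comp_apply]
        first | (split_ifs <;> omega) | omega | (split_ifs <;> simp only [*, ↓reduceIte, not_false_eq_true] at * <;> omega)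
  · -- region I + q ≤ J  :  c inserted right of b
    rw [← Finset.sum_product', ← Finset.sum_product', ← Finset.sum_filter,
      ← Finset.sum_filter]
    refine Finset.sum_bij'
      (i := fun x hx => (x.2, (⟨x.1.1 - q + 1, by
          have h1 := (Finset.mem_filter.mp hx).2; have := x.1.isLt; have := x.2.isLt;
          omega⟩ : Fin p)))
      (j := fun y hy => ((⟨y.2.1 + q - 1, by
          have h1 := (Finset.mem_filter.mp hy).2; have := y.1.isLt; have := y.2.isLt;
          omega⟩ : Fin (p + q - 1)), y.1))
      ?_ ?_ ?_ ?_ ?_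
    · intro x hx
      have h1 := (Finset.mem_filter.mp hx).2
      simp only [Finset.mem_filter, Finset.mem_product, Finset.mem_univ, true_and,
        and_true, Fin.val_mk]
      omega
    · intro y hy
      have h1 := (Finset.mem_filter.mp hy).2
      simp only [Finset.mem_filter, Finset.mem_product, Finset.mem_univ, true_and,
        and_true, Fin.val_mk]
      omega
    · intro x hx
      have h1 := (Finset.mem_filter.mp hx).2
      have := x.1.isLt
      ext <;> simp only [Fin.val_mk] <;> omega
    · intro y hy
      have h1 := (Finset.mem_filter.mp hy).2
      have := y.2.isLt
      ext <;> simp only [Fin.val_mk] <;> omega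
    · intro x hx
      have h1 := (Finset.mem_filter.mp hx).2
      have hJ := x.1.isLt; have hI := x.2.isLt
      refine mul3_congr' (congrArg a (face_congr X (fun v => ?_) σ))
        (congrArg b (face_congr X (fun v => ?_) σ))
        (congrArg c (face_congr X (fun v => ?_) σ)) <;>
      · have hv := v.isLt
        simp only [mkVert_val, nMap_val, OrderHom.comp_coe, Function.comp_apply]
        first | (split_ifs <;> omega) | omega | (split_ifs <;> simp only [*, ↓reduceIte, not_false_eq_true] at * <;> omega)
  · -- region I ≤ J < I + q  :  c inserted inside b
    rw [← Finset.sum_product', ← Finset.sum_product', ← Finset.sum_filter]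
    refine Finset.sum_bij'
      (i := fun x hx => (x.2, (⟨x.1.1 - x.2.1, by
          have h1 := (Finset.mem_filter.mp hx).2; omega⟩ : Fin q)))
      (j := fun y hy => ((⟨y.1.1 + y.2.1, by
          have := y.1.isLt; have := y.2.isLt; omega⟩ : Fin (p + q - 1)), y.1))
      ?_ ?_ ?_ ?_ ?_
    · intro x hx
      simp only [Finset.mem_filter, Finset.mem_product, Finset.mem_univ, true_and,
        and_true, Fin.val_mk]
    · intro y hy
      have := y.1.isLt; have := y.2.isLt
      simp only [Finset.mem_filter, Finset.mem_product, Finset.mem_univ, true_and,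
        and_true, Fin.val_mk]
      omega
    · intro x hx
      have h1 := (Finset.mem_filter.mp hx).2
      ext <;> simp only [Fin.val_mk] <;> omega
    · intro y hy
      have := y.1.isLt; have := y.2.isLt
      ext <;> simp only [Fin.val_mk] <;> omega
    · intro x hx
      have h1 := (Finset.mem_filter.mp hx).2
      have hJ := x.1.isLt; have hI := x.2.isLt
      refine mul3_congr' (congrArg a (face_congr X (fun v => ?_) σ))
        (congrArg b (face_congr X (fun v => ?_) σ))
        (congrArg c (face_congr X (fun v => ?_) σ)) <;>
      · have hv := v.isLt
        simp only [mkVert_val, nMap_val, OrderHom.comp_coe, Function.comp_apply]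
        first | (split_ifs <;> omega) | omega | (split_ifs <;> simp only [*, ↓reduceIte, not_false_eq_true] at * <;> split_ifs <;> omega)

lemma coreA (X : SSet) (p q r : ℕ) (a : Ch X p) (b : Ch X q) (c : Ch X r) :
    ι X ((p + q - 1) + r - 1) (cup1 X (p + q - 1) r (cup1 X p q a b) c)
    + ι X (p + (q + r - 1) - 1) (cup1 X p (q + r - 1) a (cup1 X q r b c))
    + ι X ((p + r - 1) + q - 1) (cup1 X (p + r - 1) q (cup1 X p r a c) b)
    + ι X (p + (r + q - 1) - 1) (cup1 X p (r + q - 1) a (cup1 X r q c b)) = 0 := by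
  by_cases hp : p = 0
  · subst hp
    simp [cup1_deg_zero, cup1_zero_left, ι_zero]
  · have hp1 : 1 ≤ p := Nat.one_le_iff_ne_zero.mpr hp
    rw [L1 X p q r hp1 a b c, L2 X p q r hp1 a b c, L1 X p r q hp1 a c b,
      L2 X p r q hp1 a c b,
      ι_dd X p q r (show ((p + r - 1) + q - 1 : ℕ) = (p + q - 1) + r - 1 by omega) a b c,
      ι_dd X p r q (show ((p + r - 1) + q - 1 : ℕ) = (p + q - 1) + r - 1 by omega) a c b,
      ι_nn X p r q (show ((p + r - 1) + q - 1 : ℕ) = (p + q - 1) + r - 1 by omega) a c b]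
    linear_combination
      tch_add_self X (ι X ((p + q - 1) + r - 1) (dd X p r q ((p + q - 1) + r - 1) a c b))
      + tch_add_self X (ι X ((p + q - 1) + r - 1) (dd X p q r ((p + q - 1) + r - 1) a b c))
      + tch_add_self X (ι X ((p + q - 1) + r - 1) (nn X p q r ((p + q - 1) + r - 1) a b c))
      + tch_add_self X (ι X ((p + q - 1) + r - 1) (nn X p r q ((p + q - 1) + r - 1) a c b))

/-- The commutator of the cup-one product on mod-2 simplicial
cochains satisfies the Jacobi identity exactly at the cochain level: with
`[a,b] = a ⌣₁ b + b ⌣₁ a`, one has `[[a,b],c] + [[b,c],a] + [[c,a],b] = 0`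
for all homogeneous cochains `a`, `b`, `c` with `ℤ/2` coefficients. -/
theorem cup1_bracket_jacobi (X : SSet) (p q r : ℕ)
    (a : Ch X p) (b : Ch X q) (c : Ch X r) :
    ι X ((p + q - 1) + r - 1) (brk X (p + q - 1) r (brk X p q a b) c)
    + ι X ((q + r - 1) + p - 1) (brk X (q + r - 1) p (brk X q r b c) a)
    + ι X ((r + p - 1) + q - 1) (brk X (r + p - 1) q (brk X r p c a) b) = 0 := by
  simp only [brk, cup1_add_left, cup1_add_right, cup1_chCast_left, cup1_chCast_right,
    chCast_add, ι_add, ι_chCast]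
  linear_combination coreA X p q r a b c + coreA X q r p b c a + coreA X r p q c a b
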